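/- arXiv:1112.1244 — 3 statements merged into one kernel-verified Lean document; each statement's English description precedes it below -/
import Mathlib

section
/- Let C be a code in H(m,q) with minimum distance δ ≥ 5. Then every automorphism y of H(m,q) with y(Γ1(C)) = Γ1(C) satisfies y(C) = C, i.e. C is fixed setwise by the setwise stabiliser of its neighbour set. -/
open Set

variable {m : ℕ} {Q : Type*}

/-- An automorphism of the Hamming graph `H(m,q)`: a bijection of the vertex
set `Q^m` (given as an `Equiv`) preserving Hamming distance. -/
def IsHammingAut [DecidableEq Q] (f : (Fin m → Q) ≃ (Fin m → Q)) : Prop :=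
  ∀ a b : Fin m → Q, hammingDist (f a) (f b) = hammingDist a b

/-- The set of neighbours `Γ₁(C)` of a code `C` in `H(m,q)`. -/
def Nbrs [DecidableEq Q] (C : Set (Fin m → Q)) : Set (Fin m → Q) :=
  {ν | ν ∉ C ∧ ∃ α ∈ C, hammingDist ν α = 1}

/-- The code `C` has minimum distance `δ`. -/
def IsMinDist [DecidableEq Q] (C : Set (Fin m → Q)) (δ : ℕ) : Prop :=
  (∀ a ∈ C, ∀ b ∈ C, a ≠ b → δ ≤ hammingDist a b) ∧
  ∃ a ∈ C, ∃ b ∈ C, a ≠ b ∧ hammingDist a b = δ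

/-- The neighbours `Γ₁(β)` of a single vertex `β`. -/
def Sph [DecidableEq Q] (β : Fin m → Q) : Set (Fin m → Q) :=
  {ν | hammingDist β ν = 1}

/-- The set `Pre(α, y)` of pre-codewords of `α` with respect to `y`. -/
def Pre [DecidableEq Q] (C : Set (Fin m → Q)) (α : Fin m → Q)
    (y : (Fin m → Q) ≃ (Fin m → Q)) : Set (Fin m → Q) :=
  {π | hammingDist α π = 2 ∧ y π ∈ C}

/-- The set `C(π)` of codewords `β` with `d(β,π) = 2` admitting a common
neighbour `ν` with `π`. -/
def CSet [DecidableEq Q] (C : Set (Fin m → Q)) (π : Fin m → Q) : Set (Fin m → Q) :=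
  {β | β ∈ C ∧ hammingDist β π = 2 ∧ ∃ ν, hammingDist β ν = 1 ∧ hammingDist ν π = 1}

lemma hd_update [DecidableEq Q] (α : Fin m → Q) (i : Fin m) (c : Q) (h : c ≠ α i) :
    hammingDist α (Function.update α i c) = 1 := by
  unfold hammingDist
  rw [Finset.card_eq_one]
  refine ⟨i, ?_⟩
  ext j
  simp only [Finset.mem_filter, Finset.mem_univ, true_and, Finset.mem_singleton]
  constructor
  · intro hj
    by_contra hji
    rw [Function.update_of_ne hji] at hj
    exact hj rfl
  · rintro rfl
    simp [Function.update_self, Ne.symm h]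

lemma mem_code_iff [DecidableEq Q] (C : Set (Fin m → Q)) (δ : ℕ)
    (hmin : IsMinDist C δ) (hδ : 5 ≤ δ) (α : Fin m → Q) :
    α ∈ C ↔ (α ∉ Nbrs C ∧ ∀ ν, hammingDist α ν = 1 → ν ∈ Nbrs C) := by
  constructor
  · intro hαC
    refine ⟨fun h => h.1 hαC, fun ν hν => ?_⟩
    have hνC : ν ∉ C := by
      intro hνC
      have hne : ν ≠ α := by
        intro h; rw [h, hammingDist_self] at hν; omega
      have := hmin.1 ν hνC α hαC hne
      rw [hammingDist_comm] at hν
      omega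
    exact ⟨hνC, α, hαC, by rwa [hammingDist_comm]⟩
  · rintro ⟨hN, hS⟩
    by_contra hαC
    -- the alphabet has two distinct values and m ≥ 5
    obtain ⟨a, haC, b, hbC, hab, hdab⟩ := hmin.2
    obtain ⟨j0, hj0⟩ : ∃ j, a j ≠ b j := by
      by_contra h
      push_neg at h
      exact hab (funext h)
    have hm : 5 ≤ m := by
      have := @hammingDist_le_card_fintype (Fin m) (fun _ => Q) _ _ a b
      simp only [Fintype.card_fin] at this
      omega
    -- for every coordinate i there is a codeword at distance 2 from α differing at i
    have key : ∀ i : Fin m, ∃ β ∈ C, hammingDist α β = 2 ∧ β i ≠ α i := by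
      intro i
      obtain ⟨c, hc⟩ : ∃ c : Q, c ≠ α i := by
        rcases eq_or_ne (a j0) (α i) with h | h
        · exact ⟨b j0, by rw [← h]; exact fun hh => hj0 hh.symm⟩
        · exact ⟨a j0, h⟩
      set ν := Function.update α i c with hνdef
      have hαν : hammingDist α ν = 1 := hd_update α i c hc
      obtain ⟨hνC, β, hβC, hνβ⟩ := hS ν hαν
      have hαβ2 : hammingDist α β = 2 := by
        have hle : hammingDist α β ≤ 2 := by
          have := hammingDist_triangle α ν β
          omega
        have h0 : hammingDist α β ≠ 0 := by
          intro h0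
          rw [eq_of_hammingDist_eq_zero h0] at hαC
          exact hαC hβC
        have h1 : hammingDist α β ≠ 1 := by
          intro h1
          exact hN ⟨hαC, β, hβC, h1⟩
        omega
      refine ⟨β, hβC, hαβ2, ?_⟩
      intro hβi
      -- if β agrees with α at i, then ν differs from β in ≥ 3 places
      have hsub : insert i (Finset.univ.filter fun j => α j ≠ β j) ⊆
          Finset.univ.filter fun j => ν j ≠ β j := by
        intro j hj
        rcases Finset.mem_insert.mp hj with h | hj2
        · subst h
          simp only [Finset.mem_filter, Finset.mem_univ, true_and, hνdef,
            Function.update_self]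
          rw [hβi]; exact hc
        · simp only [Finset.mem_filter, Finset.mem_univ, true_and] at hj2 ⊢
          have hji : j ≠ i := by
            rintro rfl; exact hj2 hβi.symm
          rwa [hνdef, Function.update_of_ne hji]
      have hinot : i ∉ (Finset.univ.filter fun j => α j ≠ β j) := by
        simp [hβi]
      have hc2 : (Finset.univ.filter fun j => α j ≠ β j).card = 2 := hαβ2
      have hc1 : (Finset.univ.filter fun j => ν j ≠ β j).card = 1 := hνβ
      have := Finset.card_le_card hsub
      rw [Finset.card_insert_of_notMem hinot, hc2, hc1] at this
      omega
    -- three distinct coordinates give three codewords that must coincide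
    have hne01 : (⟨0, by omega⟩ : Fin m) ≠ ⟨1, by omega⟩ := by simp [Fin.ext_iff]
    have hne02 : (⟨0, by omega⟩ : Fin m) ≠ ⟨2, by omega⟩ := by simp [Fin.ext_iff]
    have hne12 : (⟨1, by omega⟩ : Fin m) ≠ ⟨2, by omega⟩ := by simp [Fin.ext_iff]
    obtain ⟨β₀, hβ₀C, hβ₀d, hβ₀i⟩ := key ⟨0, by omega⟩
    obtain ⟨β₁, hβ₁C, hβ₁d, hβ₁i⟩ := key ⟨1, by omega⟩
    obtain ⟨β₂, hβ₂C, hβ₂d, hβ₂i⟩ := key ⟨2, by omega⟩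
    have heq : ∀ γ γ' : Fin m → Q, γ ∈ C → γ' ∈ C → hammingDist α γ = 2 →
        hammingDist α γ' = 2 → γ = γ' := by
      intro γ γ' hγ hγ' h2 h2'
      by_contra hne
      have := hmin.1 γ hγ γ' hγ' hne
      have ht := hammingDist_triangle_left γ γ' α
      omega
    have e1 : β₀ = β₁ := heq _ _ hβ₀C hβ₁C hβ₀d hβ₁d
    have e2 : β₀ = β₂ := heq _ _ hβ₀C hβ₂C hβ₀d hβ₂d
    subst e1; subst e2
    have hsub : ({⟨0, by omega⟩, ⟨1, by omega⟩, ⟨2, by omega⟩} : Finset (Fin m)) ⊆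
        Finset.univ.filter fun j => α j ≠ β₀ j := by
      intro j hj
      simp only [Finset.mem_insert, Finset.mem_singleton] at hj
      simp only [Finset.mem_filter, Finset.mem_univ, true_and]
      rcases hj with rfl | rfl | rfl
      · exact Ne.symm hβ₀i
      · exact Ne.symm hβ₁i
      · exact Ne.symm hβ₂i
    have hc3 : ({⟨0, by omega⟩, ⟨1, by omega⟩, ⟨2, by omega⟩} : Finset (Fin m)).card = 3 := by
      rw [Finset.card_insert_of_notMem (by simp [hne01, hne02]),
        Finset.card_insert_of_notMem (by simp [hne12]), Finset.card_singleton]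
    have hc2 : (Finset.univ.filter fun j => α j ≠ β₀ j).card = 2 := hβ₀d
    have := Finset.card_le_card hsub
    omega

/-- a code with minimum distance at least 5 is fixed setwise by
every automorphism stabilising its neighbour set. -/
theorem stmt_11 [DecidableEq Q] (C : Set (Fin m → Q)) (δ : ℕ)
    (hmin : IsMinDist C δ) (hδ : 5 ≤ δ)
    (y : (Fin m → Q) ≃ (Fin m → Q)) (hy : IsHammingAut y)
    (hyN : y '' Nbrs C = Nbrs C) :
    y '' C = C := by
  have hNiff : ∀ α, y α ∈ Nbrs C ↔ α ∈ Nbrs C := by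
    intro α
    constructor
    · intro h
      rw [← hyN] at h
      obtain ⟨β, hβ, hβe⟩ := h
      rwa [← y.injective hβe]
    · intro h
      rw [← hyN]
      exact ⟨α, h, rfl⟩
  have hCiff : ∀ α, y α ∈ C ↔ α ∈ C := by
    intro α
    rw [mem_code_iff C δ hmin hδ, mem_code_iff C δ hmin hδ α]
    constructor
    · rintro ⟨h1, h2⟩
      refine ⟨fun h => h1 ((hNiff α).mpr h), fun ν hν => ?_⟩
      have hd : hammingDist (y α) (y ν) = 1 := by rw [hy]; exact hν
      exact (hNiff ν).mp (h2 _ hd)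
    · rintro ⟨h1, h2⟩
      refine ⟨fun h => h1 ((hNiff α).mp h), fun ν hν => ?_⟩
      have hd : hammingDist α (y.symm ν) = 1 := by
        rw [← hy α (y.symm ν)]
        simpa using hν
      have hmem := (hNiff (y.symm ν)).mpr (h2 _ hd)
      simpa using hmem
  ext β
  constructor
  · rintro ⟨α, hα, rfl⟩
    exact (hCiff α).mpr hα
  · intro hβ
    exact ⟨y.symm β, (hCiff _).mp (by simpa using hβ), by simp⟩
end

section
/- Let C be a code in H(m,q) with minimum distance δ ≥ 3, where q is even and m is odd. Then every automorphism y of H(m,q) with y(Γ1(C)) = Γ1(C) satisfies y(C) = C. -/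
open Set

variable {m : ℕ} {Q : Type*}

section Aux
variable [DecidableEq Q]

lemma hd_filter (a b : Fin m → Q) :
    hammingDist a b = (Finset.univ.filter fun i => a i ≠ b i).card := rfl

lemma update_dist (π : Fin m → Q) (i : Fin m) (a : Q) (h : a ≠ π i) :
    hammingDist π (Function.update π i a) = 1 := by
  rw [hd_filter, Finset.card_eq_one]
  refine ⟨i, ?_⟩
  ext j
  by_cases hj : j = i
  · subst hj; simp [Function.update_self, Ne.symm h]
  · simp [Function.update_of_ne hj, hj]

lemma dist_one_exists (π ν : Fin m → Q) (h : hammingDist π ν = 1) :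
    ∃ i a, a ≠ π i ∧ ν = Function.update π i a := by
  rw [hd_filter, Finset.card_eq_one] at h
  obtain ⟨i, hi⟩ := h
  have himem : i ∈ Finset.univ.filter fun j => π j ≠ ν j := by
    rw [hi]; exact Finset.mem_singleton_self i
  rw [Finset.mem_filter] at himem
  refine ⟨i, ν i, Ne.symm himem.2, ?_⟩
  funext j
  by_cases hj : j = i
  · subst hj; simp [Function.update_self]
  · have : j ∉ Finset.univ.filter fun k => π k ≠ ν k := by
      rw [hi, Finset.mem_singleton]; exact hj
    rw [Finset.mem_filter] at this
    push_neg at this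
    rw [Function.update_of_ne hj]
    exact (this (Finset.mem_univ j)).symm

lemma two_le_dist {a b : Fin m → Q} {i j : Fin m} (hij : i ≠ j)
    (hi : a i ≠ b i) (hj : a j ≠ b j) : 2 ≤ hammingDist a b := by
  rw [hd_filter]
  have hsub : ({i, j} : Finset (Fin m)) ⊆ Finset.univ.filter fun l => a l ≠ b l := by
    intro l hl
    simp only [Finset.mem_insert, Finset.mem_singleton] at hl
    rw [Finset.mem_filter]
    rcases hl with rfl | rfl <;> exact ⟨Finset.mem_univ _, by assumption⟩
  calc 2 = ({i, j} : Finset (Fin m)).card := (Finset.card_pair hij).symm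
    _ ≤ _ := Finset.card_le_card hsub

lemma three_le_dist {a b : Fin m → Q} {i j k : Fin m} (hij : i ≠ j) (hik : i ≠ k) (hjk : j ≠ k)
    (hi : a i ≠ b i) (hj : a j ≠ b j) (hk : a k ≠ b k) : 3 ≤ hammingDist a b := by
  rw [hd_filter]
  have hsub : ({i, j, k} : Finset (Fin m)) ⊆ Finset.univ.filter fun l => a l ≠ b l := by
    intro l hl
    simp only [Finset.mem_insert, Finset.mem_singleton] at hl
    rw [Finset.mem_filter]
    rcases hl with rfl | rfl | rfl <;> exact ⟨Finset.mem_univ _, by assumption⟩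
  have h3 : ({i, j, k} : Finset (Fin m)).card = 3 := by
    rw [Finset.card_insert_of_notMem (by simp [hij, hik]),
      Finset.card_insert_of_notMem (by simp [hjk]), Finset.card_singleton]
  rw [← h3]
  exact Finset.card_le_card hsub

lemma sphere_card [Fintype Q] (π : Fin m → Q) :
    (Finset.univ.filter fun ν => hammingDist π ν = 1).card = m * (Fintype.card Q - 1) := by
  classical
  have heq : (Finset.univ.filter fun ν => hammingDist π ν = 1) =
      Finset.univ.biUnion (fun i : Fin m =>
        (Finset.univ.filter fun a : Q => a ≠ π i).image (fun a => Function.update π i a)) := by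
    ext ν
    simp only [Finset.mem_filter, Finset.mem_biUnion, Finset.mem_image, Finset.mem_univ, true_and]
    constructor
    · intro h
      obtain ⟨i, a, ha, rfl⟩ := dist_one_exists π ν h
      exact ⟨i, a, ha, rfl⟩
    · rintro ⟨i, a, ha, rfl⟩
      exact update_dist π i a ha
  rw [heq, Finset.card_biUnion]
  · have hcard : ∀ i : Fin m,
        ((Finset.univ.filter fun a : Q => a ≠ π i).image (fun a => Function.update π i a)).card
          = Fintype.card Q - 1 := by
      intro i
      rw [Finset.card_image_of_injOn, Finset.filter_ne', Finset.card_erase_of_mem (Finset.mem_univ _),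
        Finset.card_univ]
      intro a _ b _ hab
      have := congrFun hab i
      simpa using this
    rw [Finset.sum_congr rfl fun i _ => hcard i, Finset.sum_const, Finset.card_univ,
      Fintype.card_fin, smul_eq_mul]
  · intro i _ j _ hij
    simp only [Finset.disjoint_left, Finset.mem_image, Finset.mem_filter, Finset.mem_univ, true_and]
    rintro ν ⟨a, ha, rfl⟩ ⟨b, hb, hab⟩
    have := congrFun hab i
    rw [Function.update_of_ne hij, Function.update_self] at this
    exact ha this.symm

lemma common_card [Fintype Q] (π β : Fin m → Q) (h : hammingDist β π = 2) :
    (Finset.univ.filter fun ν => hammingDist π ν = 1 ∧ hammingDist ν β = 1).card = 2 := by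
  classical
  rw [hd_filter, Finset.card_eq_two] at h
  obtain ⟨i, j, hij, hfil⟩ := h
  have hmem : ∀ k, β k ≠ π k ↔ (k = i ∨ k = j) := by
    intro k
    constructor
    · intro hk
      have : k ∈ Finset.univ.filter fun l => β l ≠ π l := Finset.mem_filter.mpr ⟨Finset.mem_univ _, hk⟩
      rw [hfil] at this
      simpa using this
    · intro hk
      have : k ∈ ({i, j} : Finset (Fin m)) := by rcases hk with rfl | rfl <;> simp
      rw [← hfil, Finset.mem_filter] at this
      exact this.2
  have hβi : β i ≠ π i := (hmem i).mpr (Or.inl rfl)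
  have hβj : β j ≠ π j := (hmem j).mpr (Or.inr rfl)
  have hout : ∀ k, k ≠ i → k ≠ j → β k = π k := by
    intro k hki hkj
    by_contra hc
    rcases (hmem k).mp hc with rfl | rfl <;> simp_all
  set u := Function.update π i (β i) with hu
  set v := Function.update π j (β j) with hv
  have huv : u ≠ v := by
    intro he
    have := congrFun he i
    rw [hu, hv, Function.update_self, Function.update_of_ne hij] at this
    exact hβi this
  have hdub : hammingDist u β = 1 := by
    rw [hd_filter, Finset.card_eq_one]
    refine ⟨j, ?_⟩
    ext k
    simp only [Finset.mem_filter, Finset.mem_univ, true_and, Finset.mem_singleton]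
    constructor
    · intro hk
      by_contra hkj
      by_cases hki : k = i
      · subst hki; rw [hu, Function.update_self] at hk; exact hk rfl
      · rw [hu, Function.update_of_ne hki] at hk
        exact hk (hout k hki hkj).symm
    · rintro rfl
      rw [hu, Function.update_of_ne (Ne.symm hij)]
      exact Ne.symm hβj
  have hdvb : hammingDist v β = 1 := by
    rw [hd_filter, Finset.card_eq_one]
    refine ⟨i, ?_⟩
    ext k
    simp only [Finset.mem_filter, Finset.mem_univ, true_and, Finset.mem_singleton]
    constructor
    · intro hk
      by_contra hki
      by_cases hkj : k = j
      · subst hkj; rw [hv, Function.update_self] at hk; exact hk rfl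
      · rw [hv, Function.update_of_ne hkj] at hk
        exact hk (hout k hki hkj).symm
    · rintro rfl
      rw [hv, Function.update_of_ne hij]
      exact Ne.symm hβi
  have hset : (Finset.univ.filter fun ν => hammingDist π ν = 1 ∧ hammingDist ν β = 1)
      = {u, v} := by
    ext ν
    simp only [Finset.mem_filter, Finset.mem_univ, true_and, Finset.mem_insert, Finset.mem_singleton]
    constructor
    · rintro ⟨h1, h2⟩
      obtain ⟨k, c, hc, rfl⟩ := dist_one_exists π ν h1
      by_cases hki : k = i
      · subst hki
        left
        have hab : c = β k := by
          by_contra hab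
          have e1 : Function.update π k c k ≠ β k := by
            rw [Function.update_self]; exact hab
          have e2 : Function.update π k c j ≠ β j := by
            rw [Function.update_of_ne (Ne.symm hij)]; exact Ne.symm hβj
          have := two_le_dist hij e1 e2
          omega
        rw [hu, hab]
      · by_cases hkj : k = j
        · subst hkj
          right
          have hab : c = β k := by
            by_contra hab
            have e1 : Function.update π k c i ≠ β i := by
              rw [Function.update_of_ne hij]; exact Ne.symm hβi
            have e2 : Function.update π k c k ≠ β k := by
              rw [Function.update_self]; exact hab
            have := two_le_dist hij e1 e2
            omega
          rw [hv, hab]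
        · exfalso
          have hik : i ≠ k := fun h => hki h.symm
          have hjk : j ≠ k := fun h => hkj h.symm
          have e1 : Function.update π k c i ≠ β i := by
            rw [Function.update_of_ne hik]; exact Ne.symm hβi
          have e2 : Function.update π k c j ≠ β j := by
            rw [Function.update_of_ne hjk]; exact Ne.symm hβj
          have e3 : Function.update π k c k ≠ β k := by
            rw [Function.update_self, hout k hki hkj]; exact hc
          have := three_le_dist hij hik hjk e1 e2 e3
          omega
    · rintro (rfl | rfl)
      · exact ⟨update_dist π i (β i) hβi, hdub⟩
      · exact ⟨update_dist π j (β j) hβj, hdvb⟩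
  rw [hset]
  exact Finset.card_pair huv

end Aux

/-- if `δ ≥ 3`, `q` is even and `m` is odd, then the code is
fixed setwise by every automorphism stabilising its neighbour set. -/
theorem stmt_13 [DecidableEq Q] [Fintype Q]
    (hqeven : Even (Fintype.card Q)) (hmodd : Odd m)
    (C : Set (Fin m → Q)) (δ : ℕ)
    (hmin : IsMinDist C δ) (hδ : 3 ≤ δ)
    (y : (Fin m → Q) ≃ (Fin m → Q)) (hy : IsHammingAut y)
    (hyN : y '' Nbrs C = Nbrs C) :
    y '' C = C := by
  classical
  have hsub : y '' C ⊆ C := by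
    rintro _ ⟨α, hα, rfl⟩
    by_contra hπC
    set π := y α with hπ
    -- π is not a neighbour of C
    have hπN : π ∉ Nbrs C := by
      intro hN
      rw [← hyN] at hN
      obtain ⟨μ, hμ, hμe⟩ := hN
      have : μ = α := y.injective hμe
      subst this
      exact hμ.1 hα
    -- every vertex at distance 1 from π is a neighbour of C
    have hsph : ∀ ν, hammingDist π ν = 1 → ν ∈ Nbrs C := by
      intro ν hν
      have hμd : hammingDist α (y.symm ν) = 1 := by
        rw [← hy α (y.symm ν), Equiv.apply_symm_apply]
        exact hν
      have hne : α ≠ y.symm ν := by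
        intro he
        rw [← he] at hμd
        simp at hμd
      have hμC : y.symm ν ∉ C := by
        intro hin
        have := hmin.1 α hα _ hin hne
        omega
      have hmem : y.symm ν ∈ Nbrs C := ⟨hμC, α, hα, by rwa [hammingDist_comm]⟩
      have := Set.mem_image_of_mem y hmem
      rw [hyN, Equiv.apply_symm_apply] at this
      exact this
    -- a choice of nearest codeword
    set f : (Fin m → Q) → (Fin m → Q) := fun ν =>
      if h : ∃ β, β ∈ C ∧ hammingDist ν β = 1 then h.choose else ν with hfdef
    set S := Finset.univ.filter (fun ν => hammingDist π ν = 1) with hS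
    have hSmem : ∀ ν, ν ∈ S ↔ hammingDist π ν = 1 := by
      intro ν; rw [hS, Finset.mem_filter]; simp
    have hf : ∀ ν ∈ S, f ν ∈ C ∧ hammingDist ν (f ν) = 1 := by
      intro ν hν
      obtain ⟨hνC, β, hβ, hd⟩ := hsph ν ((hSmem ν).mp hν)
      have hex : ∃ β, β ∈ C ∧ hammingDist ν β = 1 := ⟨β, hβ, hd⟩
      rw [hfdef]
      simp only [dif_pos hex]
      exact ⟨hex.choose_spec.1, hex.choose_spec.2⟩
    -- uniqueness of the nearest codeword
    have hfu : ∀ ν ∈ S, ∀ β ∈ C, hammingDist ν β = 1 → f ν = β := by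
      intro ν hν β hβ hd
      obtain ⟨hfC, hfd⟩ := hf ν hν
      by_contra hne
      have htri : hammingDist (f ν) β ≤ 2 := by
        have h1 := hammingDist_triangle (f ν) ν β
        rw [hammingDist_comm (f ν) ν] at h1
        omega
      have := hmin.1 (f ν) hfC β hβ hne
      omega
    -- each nearest codeword is at distance 2 from π
    have hdist2 : ∀ ν ∈ S, hammingDist (f ν) π = 2 := by
      intro ν hν
      obtain ⟨hfC, hfd⟩ := hf ν hν
      have hν1 : hammingDist π ν = 1 := (hSmem ν).mp hν
      have h2 : hammingDist (f ν) π ≤ 2 := by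
        have h1 := hammingDist_triangle (f ν) ν π
        rw [hammingDist_comm (f ν) ν, hammingDist_comm ν π] at h1
        omega
      have h0 : hammingDist (f ν) π ≠ 0 := by
        intro he
        rw [hammingDist_eq_zero] at he
        exact hπC (he ▸ hfC)
      have h1 : hammingDist (f ν) π ≠ 1 := by
        intro he
        exact hπN ⟨hπC, f ν, hfC, by rwa [hammingDist_comm]⟩
      omega
    -- each fiber of f on S has exactly two elements
    have hfiber : ∀ β ∈ S.image f, (S.filter fun ν => f ν = β).card = 2 := by
      intro β hβ
      obtain ⟨ν₀, hν₀, rfl⟩ := Finset.mem_image.mp hβ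
      rw [← common_card π (f ν₀) (hdist2 ν₀ hν₀)]
      congr 1
      ext ν
      simp only [hS, Finset.mem_filter, Finset.mem_univ, true_and]
      constructor
      · rintro ⟨h1, he⟩
        refine ⟨h1, ?_⟩
        rw [← he]
        exact (hf ν ((hSmem ν).mpr h1)).2
      · rintro ⟨h1, hd⟩
        exact ⟨h1, hfu ν ((hSmem ν).mpr h1) (f ν₀) (hf ν₀ hν₀).1 hd⟩
    -- counting: |S| is even
    have hcard : S.card = 2 * (S.image f).card := by
      rw [Finset.card_eq_sum_card_image f S,
        Finset.sum_congr rfl (fun β hβ => hfiber β hβ), Finset.sum_const, smul_eq_mul, mul_comm]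
    -- counting: |S| is odd
    have hQpos : 1 ≤ Fintype.card Q := by
      have hm : 0 < m := hmodd.pos
      exact Fintype.card_pos_iff.mpr ⟨α ⟨0, hm⟩⟩
    have hodd : Odd S.card := by
      rw [hS, sphere_card π]
      exact hmodd.mul (Nat.Even.sub_odd hQpos hqeven odd_one)
    rw [Nat.odd_iff] at hodd
    omega
  have hcardC : (y '' C).ncard = C.ncard := Set.ncard_image_of_injective C y.injective
  exact Set.eq_of_subset_of_ncard_le hsub hcardC.ge (Set.toFinite C)
end

section
/- Let n ≥ 2 and consider the binary Hamming graph H(2n,2) with vertices identified with pairs (β,γ) of vectors β,γ ∈ F_2^n, and let C = {(β,β) : β ∈ F_2^n, wt(β) even}. Fix δ ∈ F_2^n with wt(δ) odd, and let y be the translation y(v) = v + (δ,δ) of F_2^{2n}. Then y is an automorphism of H(2n,2) satisfying y(Γ1(C)) = Γ1(C), but y(C) ≠ C (indeed y(C) ∩ C = ∅). In particular, the setwise stabiliser of Γ1(C) in the automorphism group of H(2n,2) does not fix C setwise. -/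
open Set

/-- Vectors in `F_2^n`. -/
abbrev V (n : ℕ) := Fin n → ZMod 2

/-- The Hamming distance on `H(2n,2)`, with vertices identified with pairs
`(β,γ)` of vectors `β, γ ∈ F_2^n`. -/
def pd {n : ℕ} (u v : V n × V n) : ℕ :=
  hammingDist u.1 v.1 + hammingDist u.2 v.2

/-- The set of neighbours `Γ₁(S)` of a code `S` in `H(2n,2)`. -/
def NbrsP {n : ℕ} (S : Set (V n × V n)) : Set (V n × V n) :=
  {ν | ν ∉ S ∧ ∃ α ∈ S, pd ν α = 1}

/-- The code `S` has minimum distance `δ`. -/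
def IsMinDistP {n : ℕ} (S : Set (V n × V n)) (δ : ℕ) : Prop :=
  (∀ a ∈ S, ∀ b ∈ S, a ≠ b → δ ≤ pd a b) ∧
  ∃ a ∈ S, ∃ b ∈ S, a ≠ b ∧ pd a b = δ

/-- The repetition-style code `U = {(β,β) : β ∈ F_2^n}`. -/
def Ucode (n : ℕ) : Set (V n × V n) := {p | p.1 = p.2}

/-- The code `C = {(β,β) : β ∈ F_2^n, wt(β) even}`. -/
def Ccode (n : ℕ) : Set (V n × V n) := {p | p.1 = p.2 ∧ Even (hammingNorm p.1)}

/-!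
A diagonal translation `(β, γ) ↦ (β + δ, γ + δ)` preserves `d(β, γ)`, and `Γ₁(C)` is exactly the
set of pairs with `d(β, γ) = 1`: such a pair has one coordinate of even weight, since
`wt(β) + wt(γ) ≡ d(β, γ) (mod 2)`, and the corresponding diagonal point of `C` is adjacent to it.
So every diagonal translation stabilises `Γ₁(C)`, while for odd `wt(δ)` it maps the even-weight
diagonal `C` onto the odd-weight diagonal.
-/

theorem hammingDist_add_right {ι : Type*} [Fintype ι] {β : ι → Type*} [∀ i, DecidableEq (β i)]
    [∀ i, Add (β i)] [∀ i, IsRightCancelAdd (β i)] (x y w : ∀ i, β i) :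
    hammingDist (x + w) (y + w) = hammingDist x y :=
  hammingDist_comp (fun i a => a + w i) fun i => add_left_injective (w i)

section ParityOverZMod2

variable {ι : Type*} [Fintype ι]

theorem natCast_hammingNorm_eq_sum (x : ι → ZMod 2) : (hammingNorm x : ZMod 2) = ∑ i, x i := by
  have h01 : ∀ a : ZMod 2, a = if a ≠ 0 then 1 else 0 := by decide
  rw [Finset.sum_congr rfl fun i _ => h01 (x i), Finset.sum_boole, hammingNorm]

theorem natCast_hammingNorm_add (x y : ι → ZMod 2) :
    (hammingNorm (x + y) : ZMod 2) = hammingNorm x + hammingNorm y := by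
  simp only [natCast_hammingNorm_eq_sum, Pi.add_apply, Finset.sum_add_distrib]

theorem natCast_hammingDist (x y : ι → ZMod 2) :
    (hammingDist x y : ZMod 2) = hammingNorm x + hammingNorm y := by
  have hneg : -x = x := funext fun i => ZMod.neg_eq_self_mod_two (x i)
  rw [hammingDist_eq_hammingNorm, hneg, natCast_hammingNorm_add]

end ParityOverZMod2

section HammingGraph

variable {n : ℕ}

theorem pd_add_right (u v w : V n × V n) : pd (u + w) (v + w) = pd u v := by
  simp only [pd, Prod.fst_add, Prod.snd_add, hammingDist_add_right]

theorem mem_NbrsP_Ccode_iff {p : V n × V n} : p ∈ NbrsP (Ccode n) ↔ hammingDist p.1 p.2 = 1 := by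
  constructor
  · rintro ⟨-, ⟨b, c⟩, ⟨hbc : b = c, -⟩, hpd⟩
    subst hbc
    rcases Nat.add_eq_one_iff.mp hpd with ⟨h1, h2⟩ | ⟨h1, h2⟩
    · rwa [hammingDist_eq_zero.mp h1, hammingDist_comm]
    · rwa [hammingDist_eq_zero.mp h2]
  · intro hp
    have hne : p.1 ≠ p.2 := hammingDist_pos.mp (by omega)
    have hparity : (hammingNorm p.1 : ZMod 2) + hammingNorm p.2 = 1 := by
      rw [← natCast_hammingDist, hp, Nat.cast_one]
    refine ⟨fun h => hne h.1, ?_⟩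
    by_cases h2 : Even (hammingNorm p.2)
    · exact ⟨(p.2, p.2), ⟨rfl, h2⟩, by simp [pd, hp]⟩
    · have h1 : Even (hammingNorm p.1) := by
        rw [← ZMod.natCast_eq_zero_iff_even]
        rw [ZMod.natCast_eq_one_iff_odd.mpr (Nat.not_even_iff_odd.mp h2)] at hparity
        exact add_eq_right.mp hparity
      exact ⟨(p.1, p.1), ⟨rfl, h1⟩, by simp [pd, hammingDist_comm, hp]⟩

theorem image_addRight_diag_NbrsP_Ccode (δ : V n) :
    Equiv.addRight ((δ, δ) : V n × V n) '' NbrsP (Ccode n) = NbrsP (Ccode n) := by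
  ext p
  rw [Equiv.image_eq_preimage_symm, Equiv.addRight_symm, mem_preimage, mem_NbrsP_Ccode_iff,
    mem_NbrsP_Ccode_iff]
  simp only [Equiv.coe_addRight, Prod.fst_add, Prod.snd_add, Prod.fst_neg, Prod.snd_neg,
    hammingDist_add_right]

theorem zero_mem_Ccode : (0 : V n × V n) ∈ Ccode n :=
  ⟨rfl, by simp [hammingNorm_zero]⟩

theorem disjoint_image_addRight_diag_Ccode {δ : V n} (hδ : Odd (hammingNorm δ)) :
    Disjoint (Equiv.addRight ((δ, δ) : V n × V n) '' Ccode n) (Ccode n) := by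
  rw [Set.disjoint_left]
  rintro _ ⟨p, ⟨-, hp⟩, rfl⟩ ⟨-, hq⟩
  rw [← ZMod.natCast_eq_zero_iff_even] at hp hq
  rw [← ZMod.natCast_eq_one_iff_odd] at hδ
  simp only [Equiv.coe_addRight, Prod.fst_add, natCast_hammingNorm_add, hp, hδ, zero_add] at hq
  exact one_ne_zero hq

end HammingGraph

theorem stmt_18_general (n : ℕ) (d : V n) (hd : Odd (hammingNorm d)) :
    (∀ u v, pd (Equiv.addRight ((d, d) : V n × V n) u)
        (Equiv.addRight ((d, d) : V n × V n) v) = pd u v) ∧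
    (Equiv.addRight ((d, d) : V n × V n)) '' NbrsP (Ccode n) = NbrsP (Ccode n) ∧
    (Equiv.addRight ((d, d) : V n × V n)) '' Ccode n ≠ Ccode n ∧
    ((Equiv.addRight ((d, d) : V n × V n)) '' Ccode n) ∩ Ccode n = ∅ ∧
    ∃ f : (V n × V n) ≃ (V n × V n),
      (∀ u v, pd (f u) (f v) = pd u v) ∧
      f '' NbrsP (Ccode n) = NbrsP (Ccode n) ∧
      f '' Ccode n ≠ Ccode n := by
  have hiso : ∀ u v, pd (Equiv.addRight ((d, d) : V n × V n) u)
      (Equiv.addRight ((d, d) : V n × V n) v) = pd u v := fun u v => pd_add_right u v _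
  have hnbrs := image_addRight_diag_NbrsP_Ccode d
  have hdisj := disjoint_image_addRight_diag_Ccode hd
  have hne : Equiv.addRight ((d, d) : V n × V n) '' Ccode n ≠ Ccode n := fun h =>
    Set.disjoint_left.mp (h ▸ hdisj) zero_mem_Ccode zero_mem_Ccode
  exact ⟨hiso, hnbrs, hne, Set.disjoint_iff_inter_eq_empty.mp hdisj, _, hiso, hnbrs, hne⟩

/-- the translation by `(δ,δ)`, with `wt(δ)` odd, is an
automorphism of `H(2n,2)` stabilising `Γ₁(C)` setwise but not `C`; indeed it
moves `C` to a disjoint set.  In particular the setwise stabiliser of `Γ₁(C)`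
does not fix `C` setwise. -/
theorem stmt_18 (n : ℕ) (hn : 2 ≤ n) (d : V n) (hd : Odd (hammingNorm d)) :
    (∀ u v, pd (Equiv.addRight ((d, d) : V n × V n) u)
        (Equiv.addRight ((d, d) : V n × V n) v) = pd u v) ∧
    (Equiv.addRight ((d, d) : V n × V n)) '' NbrsP (Ccode n) = NbrsP (Ccode n) ∧
    (Equiv.addRight ((d, d) : V n × V n)) '' Ccode n ≠ Ccode n ∧
    ((Equiv.addRight ((d, d) : V n × V n)) '' Ccode n) ∩ Ccode n = ∅ ∧
    ∃ f : (V n × V n) ≃ (V n × V n),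
      (∀ u v, pd (f u) (f v) = pd u v) ∧
      f '' NbrsP (Ccode n) = NbrsP (Ccode n) ∧
      f '' Ccode n ≠ Ccode n :=
  stmt_18_general n d hd
end
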